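/- Let R be a von Neumann algebra with identity I and let T₁, …, Tₙ ∈ R satisfy T₁*T₁ + ⋯ + Tₙ*Tₙ = I. Then there exist S₁, …, S_{n−1} ∈ R with Tᵢ = Sᵢ·√(I − Tₙ*Tₙ) for 1 ≤ i ≤ n−1, and S₁*S₁ + ⋯ + S_{n−1}*S_{n−1} equals the range projection of √(I − Tₙ*Tₙ). -/

import Mathlib

/-!
Put `A = 1 - Tₙ†Tₙ = ∑_{i<n} Tᵢ†Tᵢ` and `B = √A`. Then `‖Tᵢ x‖² ≤ ⟪A x, x⟫ = ‖B x‖²`, so by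
Douglas' factorization lemma `Tᵢ = Sᵢ B` with `Sᵢ` vanishing on `(range B)ᗮ = ker B`. An operator
vanishing on `(range B)ᗮ` is determined by its composite with `B`; since `B ∈ R`, this uniqueness
makes every `Sᵢ` commute with the commutant of `R`, so `Sᵢ ∈ R'' = R`. The same uniqueness, applied
to `B Q B = B²` for `Q = ∑ Sᵢ†Sᵢ`, gives `Q B = B`, whence `Q` is the projection onto the closure
of `range B`.
-/

open ContinuousLinearMap

variable {H : Type*} [NormedAddCommGroup H] [InnerProductSpace ℂ H] [CompleteSpace H]

namespace ContinuousLinearMap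

variable {𝕜 E F : Type*} [RCLike 𝕜] [NormedAddCommGroup E] [InnerProductSpace 𝕜 E]
  [CompleteSpace E]

section Normed

variable [NormedAddCommGroup F] [NormedSpace 𝕜 F] {G : Type*} [NormedAddCommGroup G]
  [NormedSpace 𝕜 G]

theorem ext_of_comp_eq_of_orthogonal_range_le_ker {B : G →L[𝕜] E} {f g : E →L[𝕜] F}
    (h : f ∘L B = g ∘L B) (hf : B.rangeᗮ ≤ f.ker) (hg : B.rangeᗮ ≤ g.ker) : f = g := by
  have hrange : B.range ≤ (f - g).ker := by
    rintro _ ⟨x, rfl⟩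
    simpa [sub_eq_zero] using congr($h x)
  have hclosure : B.rangeᗮᗮ ≤ (f - g).ker := by
    rw [Submodule.orthogonal_orthogonal_eq_closure]
    exact B.range.topologicalClosure_minimal hrange (f - g).isClosed_ker
  have horth : B.rangeᗮ ≤ (f - g).ker := fun y hy ↦ by
    simp [LinearMap.mem_ker.mp (hf hy), LinearMap.mem_ker.mp (hg hy)]
  have htop : B.rangeᗮ ⊔ B.rangeᗮᗮ = ⊤ := Submodule.sup_orthogonal_of_hasOrthogonalProjection
  ext x
  have hx : x ∈ (f - g).ker := sup_le horth hclosure (htop ▸ Submodule.mem_top)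
  simpa [sub_eq_zero] using hx

theorem exists_comp_eq_and_orthogonal_range_le_ker [CompleteSpace F] (B : G →L[𝕜] E)
    (T : G →L[𝕜] F) (h : ∀ x, ‖T x‖ ≤ ‖B x‖) :
    ∃ S : E →L[𝕜] F, S ∘L B = T ∧ B.rangeᗮ ≤ S.ker := by
  set V := B.range.topologicalClosure
  let e : G →ₗ[𝕜] V := (B : G →ₗ[𝕜] E).codRestrict V fun x ↦
    B.range.le_topologicalClosure ⟨x, rfl⟩
  have he : DenseRange e := fun v ↦ by
    rw [Topology.IsInducing.subtypeVal.closure_eq_preimage_closure_image, ← Set.range_comp]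
    exact v.2
  have hbound : ∃ C, ∀ x, ‖T x‖ ≤ C * ‖e x‖ := ⟨1, fun x ↦ by simpa [e] using h x⟩
  refine ⟨(T : G →ₗ[𝕜] F).extendOfNorm e ∘L V.orthogonalProjectionOnto, ?_, fun y hy ↦ ?_⟩
  · ext x
    have hproj : V.orthogonalProjectionOnto (B x) = e x :=
      V.orthogonalProjectionOnto_mem_subspace_eq_self (e x)
    simp [hproj, LinearMap.extendOfNorm_eq he hbound]
  · have hy' : y ∈ Vᗮ := by rwa [Submodule.orthogonal_closure]
    simp [Submodule.orthogonalProjectionOnto_apply_of_mem_orthogonal hy']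

end Normed

section InnerProduct

variable [NormedAddCommGroup F] [InnerProductSpace 𝕜 F] [CompleteSpace F] {ι : Type*} [Fintype ι]

theorem norm_apply_le_of_adjoint_comp_self_eq_sum {B : E →L[𝕜] F} {T : ι → E →L[𝕜] F}
    (h : adjoint B ∘L B = ∑ j, adjoint (T j) ∘L T j) (i : ι) (x : E) :
    ‖T i x‖ ≤ ‖B x‖ := by
  have hsq : ‖B x‖ ^ 2 = ∑ j, ‖T j x‖ ^ 2 := by
    simp [apply_norm_sq_eq_inner_adjoint_left, h, sum_apply, sum_inner]
  have hle : ‖T i x‖ ^ 2 ≤ ‖B x‖ ^ 2 := hsq ▸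
    Finset.single_le_sum (f := fun j ↦ ‖T j x‖ ^ 2) (fun j _ ↦ sq_nonneg _) (Finset.mem_univ i)
  exact (sq_le_sq₀ (norm_nonneg _) (norm_nonneg _)).mp hle

theorem sum_adjoint_comp_self_eq_starProjection {B : E →L[𝕜] E} (hB : IsSelfAdjoint B)
    {S : ι → E →L[𝕜] F} (hS : ∀ i, B.rangeᗮ ≤ (S i).ker)
    (h : ∑ i, adjoint (S i ∘L B) ∘L (S i ∘L B) = B ∘L B) :
    ∑ i, adjoint (S i) ∘L S i = B.range.topologicalClosure.starProjection := by
  set Q := ∑ i, adjoint (S i) ∘L S i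
  have hQ : B.rangeᗮ ≤ Q.ker := fun y hy ↦ by
    have hSy : ∀ i, S i y = 0 := fun i ↦ hS i hy
    simp [Q, hSy]
  have hQ_sa : adjoint Q = Q := by
    simp [Q, map_sum, adjoint_comp]
  have hBQ : B ∘L Q = B := by
    refine ext_of_comp_eq_of_orthogonal_range_le_ker (B := B) ?_ (fun y hy ↦ ?_)
      hB.isStarNormal.orthogonal_range.le
    · rw [← h]
      simp [Q, finsetSum_comp, comp_finsetSum, adjoint_comp, hB.adjoint_eq, comp_assoc]
    · have hQy : Q y = 0 := hQ hy
      simp [hQy]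
  have hQB : Q ∘L B = B := by
    simpa [adjoint_comp, hQ_sa, hB.adjoint_eq] using congr(adjoint $hBQ)
  refine ext_of_comp_eq_of_orthogonal_range_le_ker (B := B) ?_ hQ ?_
  · rw [hQB]
    ext x
    exact (Submodule.starProjection_eq_self_iff.mpr
      (B.range.le_topologicalClosure (LinearMap.mem_range_self _ x))).symm
  · rw [Submodule.ker_starProjection, Submodule.orthogonal_closure]

end InnerProduct

end ContinuousLinearMap

namespace VonNeumannAlgebra

variable (R : VonNeumannAlgebra H)

theorem sqrt_mem {a : H →L[ℂ] H} (ha : a ∈ R) : CFC.sqrt a ∈ R := by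
  rw [← R.commutant_commutant, mem_commutant_iff]
  intro z hz
  exact (Commute.cfcₙ_nnreal (mem_commutant_iff.mp hz a ha) NNReal.sqrt).eq.symm

theorem mem_of_mul_eq_of_orthogonal_range_le_ker {B S T : H →L[ℂ] H} (hBR : B ∈ R)
    (hB : IsSelfAdjoint B) (hT : T ∈ R) (hST : S * B = T) (hS : B.rangeᗮ ≤ S.ker) : S ∈ R := by
  rw [← R.commutant_commutant, mem_commutant_iff]
  intro z hz
  have hzB : B * z = z * B := mem_commutant_iff.mp hz B hBR
  have hzT : T * z = z * T := mem_commutant_iff.mp hz T hT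
  have hker : B.rangeᗮ = B.ker := hB.isStarNormal.orthogonal_range
  refine ext_of_comp_eq_of_orthogonal_range_le_ker (B := B) ?_ (fun y hy ↦ ?_) (fun y hy ↦ ?_)
  · simp only [← mul_def]
    calc z * S * B = z * T := by rw [mul_assoc, hST]
      _ = T * z := hzT.symm
      _ = S * z * B := by rw [← hST, mul_assoc, mul_assoc, hzB]
  · have hSy : S y = 0 := hS hy
    simp [hSy]
  · have hzy : z y ∈ B.rangeᗮ := by
      rw [hker] at hy ⊢
      have hBy : B y = 0 := hy
      rw [LinearMap.mem_ker, coe_coe, ← mul_apply_eq_comp, hzB, mul_apply_eq_comp, hBy, map_zero]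
    have hSzy : S (z y) = 0 := hS hzy
    simp [hSzy]

end VonNeumannAlgebra

theorem partition_of_unity_factorization (R : VonNeumannAlgebra H) (n : ℕ)
    (T : Fin (n + 1) → H →L[ℂ] H) (hT : ∀ i, T i ∈ R)
    (hsum : ∑ i, adjoint (T i) * T i = 1) :
    ∃ S : Fin n → H →L[ℂ] H, (∀ i, S i ∈ R) ∧
      (∀ i : Fin n,
        T i.castSucc = S i * CFC.sqrt (1 - adjoint (T (Fin.last n)) * T (Fin.last n))) ∧
      IsIdempotentElem (∑ i, adjoint (S i) * S i) ∧
      IsSelfAdjoint (∑ i, adjoint (S i) * S i) ∧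
      LinearMap.range ((∑ i, adjoint (S i) * S i : H →L[ℂ] H) : H →ₗ[ℂ] H) =
        (LinearMap.range
          ((CFC.sqrt (1 - adjoint (T (Fin.last n)) * T (Fin.last n)) : H →L[ℂ] H) : H →ₗ[ℂ] H)).topologicalClosure := by
  set A := 1 - adjoint (T (Fin.last n)) * T (Fin.last n)
  have hA_sum : A = ∑ i : Fin n, adjoint (T i.castSucc) * T i.castSucc :=
    (eq_sub_of_add_eq ((Fin.sum_univ_castSucc _).symm.trans hsum)).symm
  have hA : 0 ≤ A := hA_sum ▸ Finset.sum_nonneg fun i _ ↦ by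
    simpa [star_eq_adjoint] using star_mul_self_nonneg (T i.castSucc)
  have hAR : A ∈ R := sub_mem (one_mem R) (mul_mem (star_mem (hT _)) (hT _))
  set B := CFC.sqrt A
  have hB : IsSelfAdjoint B := (CFC.sqrt_nonneg A).isSelfAdjoint
  have hBB : adjoint B ∘L B = ∑ i : Fin n, adjoint (T i.castSucc) ∘L T i.castSucc := by
    rw [hB.adjoint_eq]
    exact (CFC.sqrt_mul_sqrt_self A hA).trans hA_sum
  choose S hSB hS using fun i : Fin n ↦ exists_comp_eq_and_orthogonal_range_le_ker B
    (T i.castSucc) (norm_apply_le_of_adjoint_comp_self_eq_sum hBB i)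
  have hQ : ∑ i, adjoint (S i) * S i = B.range.topologicalClosure.starProjection :=
    sum_adjoint_comp_self_eq_starProjection hB hS (by simpa [hSB, hB.adjoint_eq] using hBB.symm)
  refine ⟨S, fun i ↦ R.mem_of_mul_eq_of_orthogonal_range_le_ker (R.sqrt_mem hAR) hB (hT _)
    (hSB i) (hS i), fun i ↦ (hSB i).symm, ?_⟩
  rw [hQ]
  exact ⟨Submodule.isIdempotentElem_starProjection _, isSelfAdjoint_starProjection _,
    Submodule.range_starProjection _⟩
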